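/- Let n and k be integers with 2 ≤ k ≤ n/2 and let OJZJ be as defined. Then the Pareto front of OJZJ is {(a, 2k + n - a) : a ∈ [2k..n] ∪ {k, n + k}}, and its cardinality is n - 2k + 3. -/
import Mathlib

/-- Number of ones of a bit string. -/
def onesCount {n : ℕ} (x : Fin n → Bool) : ℕ :=
  (Finset.univ.filter fun i => x i = true).card

/-- Number of zeros of a bit string. -/
def zerosCount {n : ℕ} (x : Fin n → Bool) : ℕ :=
  (Finset.univ.filter fun i => x i = false).card

/-- The first OneJumpZeroJump objective `J^(1)`, based on the number of ones. -/
def J1 (n k : ℕ) (x : Fin n → Bool) : ℕ :=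
  if onesCount x ≤ n - k ∨ onesCount x = n then k + onesCount x else n - onesCount x

/-- The second OneJumpZeroJump objective `J^(0)`, based on the number of zeros. -/
def J0 (n k : ℕ) (x : Fin n → Bool) : ℕ :=
  if zerosCount x ≤ n - k ∨ zerosCount x = n then k + zerosCount x else n - zerosCount x

/-- `x` is Pareto-optimal for OneJumpZeroJump (component-wise maximization). -/
def ParetoOJZJ (n k : ℕ) (x : Fin n → Bool) : Prop :=
  ¬ ∃ y : Fin n → Bool,
    J1 n k x ≤ J1 n k y ∧ J0 n k x ≤ J0 n k y ∧
    (J1 n k x < J1 n k y ∨ J0 n k x < J0 n k y)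

lemma ones_add_zeros {n : ℕ} (x : Fin n → Bool) : onesCount x + zerosCount x = n := by
  classical
  unfold onesCount zerosCount
  have h := Finset.card_filter_add_card_filter_not
    (s := (Finset.univ : Finset (Fin n))) (p := fun i => x i = true)
  simp only [Bool.not_eq_true, Finset.card_univ, Fintype.card_fin] at h
  exact h

lemma ones_le {n : ℕ} (x : Fin n → Bool) : onesCount x ≤ n := by
  have := ones_add_zeros x; omega

lemma J0_char (n k : ℕ) (hk : k ≤ n) (x : Fin n → Bool) :
    J0 n k x = if k ≤ onesCount x ∨ onesCount x = 0 then k + (n - onesCount x)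
      else onesCount x := by
  have h1 := ones_add_zeros x
  unfold J0
  split_ifs with h h' h' <;> omega

lemma exists_ones (n o : ℕ) (h : o ≤ n) : ∃ x : Fin n → Bool, onesCount x = o := by
  classical
  refine ⟨fun i => decide ((i : ℕ) < o), ?_⟩
  unfold onesCount
  simp only [decide_eq_true_eq]
  rcases eq_or_lt_of_le h with rfl | h'
  · simp [Fin.is_lt]
  · have : (Finset.univ.filter fun i : Fin n => (i : ℕ) < o) = Finset.Iio ⟨o, h'⟩ := by
      ext i
      simp [Fin.lt_def]
    rw [this, Fin.card_Iio]

lemma J_vals (n k : ℕ) (hk : 2 ≤ k) (hkn : 2 * k ≤ n) (x : Fin n → Bool)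
    (h : onesCount x = 0 ∨ (k ≤ onesCount x ∧ onesCount x ≤ n - k) ∨ onesCount x = n) :
    J1 n k x = k + onesCount x ∧ J0 n k x = k + (n - onesCount x) := by
  have ho := ones_le x
  rw [J0_char n k (by omega) x]
  unfold J1
  split_ifs <;> omega

lemma sum_le (n k : ℕ) (hk : 2 ≤ k) (hkn : 2 * k ≤ n) (x : Fin n → Bool) :
    J1 n k x + J0 n k x ≤ n + 2 * k := by
  have ho := ones_le x
  rw [J0_char n k (by omega) x]
  unfold J1
  split_ifs <;> omega

lemma pareto_of_sum (n k : ℕ) (hk : 2 ≤ k) (hkn : 2 * k ≤ n) (x : Fin n → Bool)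
    (hs : J1 n k x + J0 n k x = n + 2 * k) : ParetoOJZJ n k x := by
  rintro ⟨y, h1, h2, h3⟩
  have := sum_le n k hk hkn y
  omega

/-- The Pareto front of OneJumpZeroJump is
`{(a, 2k + n - a) : a ∈ [2k..n] ∪ {k, n + k}}` and has cardinality
`n - 2k + 3`. -/
theorem stmt_14 (n k : ℕ) (hk : 2 ≤ k) (hkn : 2 * k ≤ n) :
    ({p : ℕ × ℕ | ∃ x : Fin n → Bool, ParetoOJZJ n k x ∧ p = (J1 n k x, J0 n k x)}
        = {p : ℕ × ℕ | ∃ a : ℕ,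
            ((2 * k ≤ a ∧ a ≤ n) ∨ a = k ∨ a = n + k) ∧ p = (a, 2 * k + n - a)}) ∧
    {p : ℕ × ℕ | ∃ x : Fin n → Bool, ParetoOJZJ n k x ∧ p = (J1 n k x, J0 n k x)}.ncard
        = n - 2 * k + 3 := by
  have hset : {p : ℕ × ℕ | ∃ x : Fin n → Bool, ParetoOJZJ n k x ∧ p = (J1 n k x, J0 n k x)}
      = {p : ℕ × ℕ | ∃ a : ℕ,
          ((2 * k ≤ a ∧ a ≤ n) ∨ a = k ∨ a = n + k) ∧ p = (a, 2 * k + n - a)} := by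
    ext p
    simp only [Set.mem_setOf_eq]
    constructor
    · rintro ⟨x, hpar, rfl⟩
      have ho := ones_le x
      -- first show onesCount x is in a good position
      have hgood : onesCount x = 0 ∨ (k ≤ onesCount x ∧ onesCount x ≤ n - k) ∨
          onesCount x = n := by
        by_contra hbad
        push_neg at hbad
        rcases Nat.lt_or_ge (onesCount x) k with hlt | hge
        · -- 1 ≤ o < k : dominated by all-ones
          obtain ⟨y, hy⟩ := exists_ones n n le_rfl
          obtain ⟨hJ1y, hJ0y⟩ := J_vals n k hk hkn y (by omega)
          have hJ1x : J1 n k x = k + onesCount x := by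
            unfold J1; rw [if_pos (by omega)]
          have hJ0x : J0 n k x = onesCount x := by
            rw [J0_char n k (by omega) x, if_neg (by omega)]
          exact hpar ⟨y, by omega, by omega, by omega⟩
        · -- n - k < o < n : dominated by all-zeros
          have h1 : n - k < onesCount x := by omega
          have h2 : onesCount x < n := by omega
          obtain ⟨y, hy⟩ := exists_ones n 0 (by omega)
          obtain ⟨hJ1y, hJ0y⟩ := J_vals n k hk hkn y (by omega)
          have hJ1x : J1 n k x = n - onesCount x := by
            unfold J1; rw [if_neg (by omega)]
          have hJ0x : J0 n k x = k + (n - onesCount x) := by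
            rw [J0_char n k (by omega) x, if_pos (by omega)]
          exact hpar ⟨y, by omega, by omega, by omega⟩
      obtain ⟨hJ1, hJ0⟩ := J_vals n k hk hkn x hgood
      refine ⟨k + onesCount x, ?_, by rw [hJ1, hJ0]; congr 1; omega⟩
      omega
    · rintro ⟨a, ha, rfl⟩
      have hoex : ∃ o : ℕ, o ≤ n ∧ a = k + o ∧
          (o = 0 ∨ (k ≤ o ∧ o ≤ n - k) ∨ o = n) := by
        rcases ha with ⟨h1, h2⟩ | rfl | rfl
        · exact ⟨a - k, by omega, by omega, by omega⟩
        · exact ⟨0, by omega, by omega, by omega⟩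
        · exact ⟨n, by omega, by omega, by omega⟩
      obtain ⟨o, hon, rfl, hgood⟩ := hoex
      obtain ⟨x, hx⟩ := exists_ones n o hon
      obtain ⟨hJ1, hJ0⟩ := J_vals n k hk hkn x (by omega)
      refine ⟨x, pareto_of_sum n k hk hkn x (by omega), ?_⟩
      rw [hJ1, hJ0, hx]
      congr 1
      omega
  refine ⟨hset, ?_⟩
  rw [hset]
  have himg : {p : ℕ × ℕ | ∃ a : ℕ,
        ((2 * k ≤ a ∧ a ≤ n) ∨ a = k ∨ a = n + k) ∧ p = (a, 2 * k + n - a)}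
      = ↑((Finset.Icc (2 * k) n ∪ {k, n + k}).image fun a => (a, 2 * k + n - a)) := by
    ext p
    simp only [Set.mem_setOf_eq, Finset.coe_image, Set.mem_image, Finset.mem_coe,
      Finset.mem_union, Finset.mem_Icc, Finset.mem_insert, Finset.mem_singleton]
    constructor
    · rintro ⟨a, ha, rfl⟩; exact ⟨a, by tauto, rfl⟩
    · rintro ⟨a, ha, rfl⟩; exact ⟨a, by tauto, rfl⟩
  rw [himg, Set.ncard_coe_finset,
    Finset.card_image_of_injective _ (fun a b hab => (Prod.mk.injEq _ _ _ _ ▸ hab).1)]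
  have hd : Disjoint (Finset.Icc (2 * k) n) ({k, n + k} : Finset ℕ) := by
    simp only [Finset.disjoint_left, Finset.mem_Icc, Finset.mem_insert, Finset.mem_singleton]
    rintro a ⟨h1, h2⟩ (rfl | rfl) <;> omega
  rw [Finset.card_union_of_disjoint hd, Nat.card_Icc, Finset.card_pair (by omega)]
  omega
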